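/- arXiv:1904.08402 — 2 statements merged into one kernel-verified Lean document; each statement's English description precedes it below -/
import Mathlib

section
/- If a Dyck word σ factorizes as σ = σ_1 · σ_2 · … · σ_t where each σ_i is a Dyck word, then width(σ) ≤ 1 + max_{1≤i≤t} width(σ_i). -/
/-- A Dyck word: entries ±1, total sum zero, all prefix sums nonnegative. -/
def IsDyck (w : List ℤ) : Prop :=
  (∀ a ∈ w, a = 1 ∨ a = -1) ∧ w.sum = 0 ∧ ∀ k, 0 ≤ (w.take k).sum

/-- Width of a finite set of naturals: the least number of intervals of
consecutive integers whose union equals the set. -/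
noncomputable def setWidth (S : Finset ℕ) : ℕ :=
  sInf {k | ∃ f : Fin k → ℕ × ℕ, (S : Set ℕ) = ⋃ i, Set.Icc (f i).1 (f i).2}

/-- A re-pairing of a word `w` over `{+1, -1}` (positions are 0-based):
a sequence of pairs (ℓᵢ, rᵢ) with w(ℓᵢ) = +1, w(rᵢ) = −1, ℓᵢ < rᵢ, such that
every position of `w` occurs in exactly one pair. -/
structure RePairing (w : List ℤ) where
  pairs : List (ℕ × ℕ)
  perm : (pairs.flatMap fun q => [q.1, q.2]).Perm (List.range w.length)
  lt : ∀ q ∈ pairs, q.1 < q.2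
  plus : ∀ q ∈ pairs, w.getD q.1 0 = 1
  minus : ∀ q ∈ pairs, w.getD q.2 0 = -1

/-- The width of a re-pairing: maximum over times `t` of the width of the set
of positions erased within the first `t` pairs. -/
noncomputable def repWidth {w : List ℤ} (p : RePairing w) : ℕ :=
  (Finset.range (p.pairs.length + 1)).sup
    fun t => setWidth ((p.pairs.take t).flatMap fun q => [q.1, q.2]).toFinset

/-- Width of a word: minimum width over all its re-pairings. -/
noncomputable def dyckWidth (w : List ℤ) : ℕ :=
  sInf {k | ∃ p : RePairing w, repWidth p = k}

section lemmas

noncomputable def sw (A : Set ℕ) : ℕ :=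
  sInf {k | ∃ f : Fin k → ℕ × ℕ, A = ⋃ i, Set.Icc (f i).1 (f i).2}

lemma sw_le {A : Set ℕ} {k : ℕ} (f : Fin k → ℕ × ℕ)
    (hf : A = ⋃ i, Set.Icc (f i).1 (f i).2) : sw A ≤ k :=
  Nat.sInf_le ⟨f, hf⟩

lemma sw_empty : sw (∅ : Set ℕ) = 0 :=
  Nat.le_zero.mp (sw_le (fun i : Fin 0 => i.elim0) (by simp))

lemma exists_cover (A : Set ℕ) (hA : A.Finite) :
    ∃ f : Fin (sw A) → ℕ × ℕ, A = ⋃ i, Set.Icc (f i).1 (f i).2 := by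
  classical
  have hne : {k | ∃ f : Fin k → ℕ × ℕ, A = ⋃ i, Set.Icc (f i).1 (f i).2}.Nonempty := by
    obtain ⟨l, hl⟩ := hA.exists_finset_coe
    refine ⟨l.card, fun i => (l.orderIsoOfFin rfl i, l.orderIsoOfFin rfl i), ?_⟩
    rw [← hl]
    ext x
    simp only [Set.mem_iUnion, Set.Icc_self, Set.mem_singleton_iff, Finset.mem_coe]
    constructor
    · intro hx
      exact ⟨(l.orderIsoOfFin rfl).symm ⟨x, hx⟩, by simp⟩
    · rintro ⟨i, rfl⟩; exact (l.orderIsoOfFin rfl i).2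
  exact Nat.sInf_mem hne

lemma sw_shift_le (A : Set ℕ) (hA : A.Finite) (n : ℕ) :
    sw ((· + n) '' A) ≤ sw A := by
  obtain ⟨f, hf⟩ := exists_cover A hA
  refine sw_le (fun i => ((f i).1 + n, (f i).2 + n)) ?_
  have h2 := congrArg (Set.image (· + n)) hf
  rw [Set.image_iUnion] at h2
  refine h2.trans (Set.iUnion_congr fun i => ?_)
  ext x
  simp only [Set.mem_image, Set.mem_Icc]
  constructor
  · rintro ⟨y, ⟨h1, h2⟩, rfl⟩; omega
  · rintro ⟨h1, h2⟩; exact ⟨x - n, by omega, by omega⟩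

lemma sw_prefix_union (A : Set ℕ) (hA : A.Finite) (m : ℕ) :
    sw (Set.Ico 0 m ∪ A) ≤ 1 + sw A := by
  obtain ⟨f, hf⟩ := exists_cover A hA
  rcases Nat.eq_zero_or_pos m with rfl | hm
  · rw [Set.Ico_self, Set.empty_union]
    exact le_trans (sw_le f hf) (by omega)
  · refine sw_le (fun i : Fin (1 + sw A) =>
      if h : (i : ℕ) < sw A then f ⟨i, h⟩ else (0, m - 1)) ?_
    ext x
    have hfx : x ∈ A ↔ ∃ i, (f i).1 ≤ x ∧ x ≤ (f i).2 := by
      rw [Set.ext_iff.mp hf x]; simp [Set.mem_iUnion]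
    simp only [Set.mem_union, Set.mem_iUnion, Set.mem_Ico, Set.mem_Icc, hfx]
    constructor
    · rintro (⟨h0, hx⟩ | ⟨i, hx⟩)
      · refine ⟨⟨sw A, by omega⟩, ?_⟩
        rw [dif_neg (by simp)]
        simp only
        omega
      · refine ⟨⟨i, by omega⟩, ?_⟩
        rw [dif_pos i.2]
        exact hx
    · rintro ⟨i, hx⟩
      by_cases h : (i : ℕ) < sw A
      · rw [dif_pos h] at hx
        exact Or.inr ⟨⟨i, h⟩, hx⟩
      · rw [dif_neg h] at hx
        exact Or.inl ⟨hx.1, by omega⟩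

lemma setWidth_eq_sw (S : Finset ℕ) : setWidth S = sw (S : Set ℕ) := rfl

lemma flatMap_shift (l : List (ℕ × ℕ)) (n : ℕ) :
    ((l.map fun q => (q.1 + n, q.2 + n)).flatMap fun q => [q.1, q.2]) =
      (l.flatMap fun q => [q.1, q.2]).map (· + n) := by
  rw [List.flatMap_map, List.map_flatMap]
  rfl

lemma RePairing.pos_lt {w : List ℤ} (p : RePairing w) {q : ℕ × ℕ} (hq : q ∈ p.pairs) :
    q.1 < w.length ∧ q.2 < w.length := by
  constructor
  · have : q.1 ∈ List.range w.length := by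
      rw [← p.perm.mem_iff]
      exact List.mem_flatMap.mpr ⟨q, hq, by simp⟩
    simpa using this
  · have : q.2 ∈ List.range w.length := by
      rw [← p.perm.mem_iff]
      exact List.mem_flatMap.mpr ⟨q, hq, by simp⟩
    simpa using this

def RePairing.append {u v : List ℤ} (pu : RePairing u) (pv : RePairing v) :
    RePairing (u ++ v) where
  pairs := pu.pairs ++ pv.pairs.map fun q => (q.1 + u.length, q.2 + u.length)
  perm := by
    rw [List.flatMap_append, flatMap_shift, List.length_append, List.range_add]
    refine pu.perm.append ?_
    refine (pv.perm.map _).trans ?_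
    rw [List.map_congr_left fun x _ => Nat.add_comm x u.length]
  lt := by
    intro q hq
    rcases List.mem_append.mp hq with h | h
    · exact pu.lt q h
    · obtain ⟨r, hr, rfl⟩ := List.mem_map.mp h
      exact Nat.add_lt_add_right (pv.lt r hr) _
  plus := by
    intro q hq
    rcases List.mem_append.mp hq with h | h
    · rw [List.getD_append _ _ _ _ (pu.pos_lt h).1]
      exact pu.plus q h
    · obtain ⟨r, hr, rfl⟩ := List.mem_map.mp h
      rw [List.getD_append_right _ _ _ _ (by omega : u.length ≤ r.1 + u.length)]
      simpa using pv.plus r hr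
  minus := by
    intro q hq
    rcases List.mem_append.mp hq with h | h
    · rw [List.getD_append _ _ _ _ (pu.pos_lt h).2]
      exact pu.minus q h
    · obtain ⟨r, hr, rfl⟩ := List.mem_map.mp h
      rw [List.getD_append_right _ _ _ _ (by omega : u.length ≤ r.2 + u.length)]
      simpa using pv.minus r hr

def RePairing.wrap {u : List ℤ} (pu : RePairing u) : RePairing (1 :: (u ++ [-1])) where
  pairs := (0, u.length + 1) :: pu.pairs.map fun q => (q.1 + 1, q.2 + 1)
  perm := by
    have hlen : (1 :: (u ++ [-1]) : List ℤ).length = u.length + 2 := by simp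
    rw [hlen]
    simp only [List.flatMap_cons, flatMap_shift]
    have h1 : List.range (u.length + 2) =
        0 :: ((List.range u.length).map (· + 1) ++ [u.length + 1]) := by
      rw [List.range_succ_eq_map, List.range_succ, List.map_append]
      rfl
    rw [h1]
    show (0 :: (u.length + 1) :: ((pu.pairs.flatMap fun q => [q.1, q.2]).map (· + 1))).Perm _
    refine List.Perm.cons 0 ?_
    exact List.Perm.trans (List.Perm.cons _ (pu.perm.map _)) (List.perm_append_singleton _ _).symm
  lt := by
    intro q hq
    rcases List.mem_cons.mp hq with rfl | h
    · omega
    · obtain ⟨r, hr, rfl⟩ := List.mem_map.mp h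
      exact Nat.add_lt_add_right (pu.lt r hr) _
  plus := by
    intro q hq
    rcases List.mem_cons.mp hq with rfl | h
    · rfl
    · obtain ⟨r, hr, rfl⟩ := List.mem_map.mp h
      show (1 :: (u ++ [-1]) : List ℤ).getD (r.1 + 1) 0 = 1
      rw [List.getD_cons_succ, List.getD_append _ _ _ _ (pu.pos_lt hr).1]
      exact pu.plus r hr
  minus := by
    intro q hq
    rcases List.mem_cons.mp hq with rfl | h
    · show (1 :: (u ++ [-1]) : List ℤ).getD (u.length + 1) 0 = -1
      rw [List.getD_cons_succ, List.getD_append_right _ _ _ _ (le_refl u.length)]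
      simp
    · obtain ⟨r, hr, rfl⟩ := List.mem_map.mp h
      show (1 :: (u ++ [-1]) : List ℤ).getD (r.2 + 1) 0 = -1
      rw [List.getD_cons_succ, List.getD_append _ _ _ _ (pu.pos_lt hr).2]
      exact pu.minus r hr

lemma dyck_decomp {w : List ℤ} (hw : IsDyck w) (hne : w ≠ []) :
    ∃ u v, w = 1 :: (u ++ (-1) :: v) ∧ IsDyck u ∧ IsDyck v := by
  obtain ⟨hpm, hsum, hpre⟩ := hw
  obtain ⟨a, w', rfl⟩ : ∃ a w', w = a :: w' := by
    cases w with
    | nil => exact absurd rfl hne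
    | cons a w' => exact ⟨a, w', rfl⟩
  have ha : a = 1 := by
    have h1 := hpre 1
    simp only [List.take_succ_cons, List.take_zero, List.sum_cons, List.sum_nil, add_zero] at h1
    rcases hpm a List.mem_cons_self with h | h
    · exact h
    · omega
  subst ha
  have htake : ∀ j, ((1 :: w' : List ℤ).take (j + 1)).sum = 1 + (w'.take j).sum := by
    intro j; simp
  have hex : ∃ k, 1 ≤ k ∧ ((1 :: w' : List ℤ).take k).sum = 0 := by
    refine ⟨(1 :: w' : List ℤ).length, by simp, ?_⟩
    rw [List.take_length]; exact hsum
  classical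
  obtain ⟨k, hk1, hk0, hmin⟩ :
      ∃ k, 1 ≤ k ∧ ((1 :: w' : List ℤ).take k).sum = 0 ∧
        ∀ j, j < k → ¬(1 ≤ j ∧ ((1 :: w' : List ℤ).take j).sum = 0) :=
    ⟨Nat.find hex, (Nat.find_spec hex).1, (Nat.find_spec hex).2,
      fun j hj => Nat.find_min hex hj⟩
  have hpos : ∀ j, 1 ≤ j → j < k → 1 ≤ ((1 :: w' : List ℤ).take j).sum := by
    intro j h1j hjk
    have h0 := hpre j
    have := hmin j hjk
    omega
  have hklen : k ≤ w'.length + 1 := by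
    by_contra hcon
    push_neg at hcon
    exact hmin (w'.length + 1) hcon
      ⟨by omega, by rw [show w'.length + 1 = (1 :: w' : List ℤ).length by simp, List.take_length]; exact hsum⟩
  have hk2 : 2 ≤ k := by
    by_contra hcon
    have hk1' : k = 1 := by omega
    subst hk1'
    simp only [List.take_succ_cons, List.take_zero, List.sum_cons, List.sum_nil] at hk0
    omega
  have hk2w : k - 2 < w'.length := by omega
  have heq : k = (k - 2 + 1) + 1 := by omega
  have e1 : ((1 :: w' : List ℤ).take k).sum = 1 + (w'.take (k-2+1)).sum := by
    have e := htake (k-2+1)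
    rw [← heq] at e
    exact e
  have e3 : (w'.take (k - 2 + 1)).sum = (w'.take (k-2)).sum + w'[k-2] :=
    List.sum_take_succ _ _ hk2w
  have e4 : ((1 :: w' : List ℤ).take (k-1)).sum = 1 + (w'.take (k-2)).sum := by
    have e := htake (k-2)
    rw [show k - 2 + 1 = k - 1 by omega] at e
    exact e
  have hentry : w'[k-2] = -1 := by
    have hp := hpos (k-1) (by omega) (by omega)
    rcases hpm w'[k-2] (List.mem_cons_of_mem _ (List.getElem_mem hk2w)) with h | h
    · omega
    · exact h
  refine ⟨w'.take (k-2), w'.drop (k-1), ?_, ?_, ?_⟩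
  · have hsplit : w' = w'.take (k-1) ++ w'.drop (k-1) := (List.take_append_drop _ _).symm
    have htk : w'.take (k-1) = w'.take (k-2) ++ [w'[k-2]] := by
      rw [show k - 1 = k - 2 + 1 by omega]
      exact (List.take_concat_get hk2w).symm.trans List.concat_eq_append
    rw [hentry] at htk
    conv_lhs => rw [hsplit, htk]
    simp [Nat.add_sub_cancel]
  · -- IsDyck u
    have htk : w'.take (k-1) = w'.take (k-2) ++ [w'[k-2]] := by
      rw [show k - 1 = k - 2 + 1 by omega]
      exact (List.take_concat_get hk2w).symm.trans List.concat_eq_append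
    have hsum_u : (w'.take (k-2)).sum = 0 := by omega
    refine ⟨fun x hx => hpm x (List.mem_cons_of_mem _ (List.mem_of_mem_take hx)), hsum_u, ?_⟩
    intro j
    rw [List.take_take]
    rcases Nat.le_total (k-2) j with h | h
    · rw [min_eq_right h, hsum_u]
    · rw [min_eq_left h]
      have := hpos (j+1) (by omega) (by omega)
      rw [htake j] at this
      omega
  · -- IsDyck v
    have hdropk : (1 :: w' : List ℤ).drop k = w'.drop (k-1) := by
      conv_lhs => rw [show k = (k-1) + 1 by omega]
      exact List.drop_succ_cons
    have hsum_v : (w'.drop (k-1)).sum = 0 := by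
      have h1 := congrArg List.sum (List.take_append_drop k (1 :: w' : List ℤ))
      rw [List.sum_append, hk0, hdropk] at h1
      have hs' := hsum
      simp only [List.sum_cons] at hs' h1
      omega
    refine ⟨fun x hx => hpm x (List.mem_cons_of_mem _ (List.mem_of_mem_drop hx)), hsum_v, ?_⟩
    intro j
    have h1 : (1 :: w' : List ℤ).take (k + j) =
        (1 :: w' : List ℤ).take k ++ ((1 :: w' : List ℤ).drop k).take j := List.take_add
    have h2 := hpre (k + j)
    rw [h1, List.sum_append, hk0, hdropk] at h2
    omega


lemma exists_repairing_aux : ∀ (n : ℕ) (w : List ℤ), w.length = n → IsDyck w → Nonempty (RePairing w) := by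
  intro n
  induction n using Nat.strong_induction_on with
  | _ n ih =>
    intro w hlen hw
    rcases eq_or_ne w [] with rfl | hne
    · exact ⟨⟨[], by simp, by simp, by simp, by simp⟩⟩
    · obtain ⟨u, v, heq, hu, hv⟩ := dyck_decomp hw hne
      have hul : u.length < n := by rw [← hlen, heq]; simp
      have hvl : v.length < n := by rw [← hlen, heq]; simp; omega
      obtain ⟨pu⟩ := ih u.length hul u rfl hu
      obtain ⟨pv⟩ := ih v.length hvl v rfl hv
      have hw' : (1 :: (u ++ [-1])) ++ v = w := by rw [heq]; simp
      exact ⟨hw' ▸ (pu.wrap.append pv)⟩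

lemma exists_repairing (w : List ℤ) (hw : IsDyck w) : Nonempty (RePairing w) :=
  exists_repairing_aux w.length w rfl hw

lemma full_set {w : List ℤ} (p : RePairing w) :
    (↑(p.pairs.flatMap fun q => [q.1, q.2]).toFinset : Set ℕ) = Set.Ico 0 w.length := by
  ext x
  rw [List.coe_toFinset]
  simp only [Set.mem_setOf_eq, Set.mem_Ico, p.perm.mem_iff, List.mem_range]
  omega

lemma sw_take_le {w : List ℤ} (p : RePairing w) (t : ℕ) :
    sw (↑((p.pairs.take t).flatMap fun q => [q.1, q.2]).toFinset : Set ℕ) ≤ repWidth p := by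
  rcases le_or_gt t p.pairs.length with h | h
  · exact Finset.le_sup (s := Finset.range (p.pairs.length + 1)) (b := t) (f := fun t => setWidth ((p.pairs.take t).flatMap fun q => [q.1, q.2]).toFinset)
      (Finset.mem_range.mpr (by omega))
  · rw [List.take_of_length_le (by omega)]
    have h2 : setWidth ((p.pairs.take p.pairs.length).flatMap fun q => [q.1, q.2]).toFinset
        ≤ repWidth p := by
      have := Finset.le_sup (s := Finset.range (p.pairs.length + 1)) (b := p.pairs.length)
        (f := fun t => setWidth ((p.pairs.take t).flatMap fun q => [q.1, q.2]).toFinset)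
        (Finset.mem_range.mpr (Nat.lt_succ_self p.pairs.length))
      exact this
    rw [List.take_length] at h2
    exact h2

lemma coe_toFinset_map (l : List ℕ) (f : ℕ → ℕ) :
    (↑(l.map f).toFinset : Set ℕ) = f '' ↑l.toFinset := by
  ext x
  simp [List.coe_toFinset]

lemma image_add_Ico (n m : ℕ) : (· + n) '' Set.Ico 0 m = Set.Ico n (m + n) := by
  ext x
  simp only [Set.mem_image, Set.mem_Ico]
  constructor
  · rintro ⟨y, hy, rfl⟩; omega
  · rintro ⟨h1, h2⟩; exact ⟨x - n, by omega, by omega⟩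

lemma key (ws : List (List ℤ)) (h : ∀ u ∈ ws, IsDyck u) :
    ∃ p : RePairing ws.flatten, ∀ t : ℕ, ∃ (m : ℕ) (T : Set ℕ), T.Finite ∧
      (↑(((p.pairs.take t).flatMap fun q => [q.1, q.2]).toFinset) : Set ℕ)
        = Set.Ico 0 m ∪ T ∧
      sw T ≤ (ws.map dyckWidth).foldr max 0 := by
  induction ws with
  | nil =>
    refine ⟨⟨[], by simp, by simp, by simp, by simp⟩, fun t => ⟨0, ∅, Set.finite_empty, ?_, ?_⟩⟩
    · simp
    · simp [sw_empty]
  | cons u rest ih =>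
    obtain ⟨prest, hrest⟩ := ih fun x hx => h x (List.mem_cons_of_mem _ hx)
    have hne : {k | ∃ p : RePairing u, repWidth p = k}.Nonempty := by
      obtain ⟨p0⟩ := exists_repairing u (h u List.mem_cons_self)
      exact ⟨repWidth p0, p0, rfl⟩
    obtain ⟨pu, hpu⟩ := Nat.sInf_mem hne
    refine ⟨pu.append prest, fun t => ?_⟩
    have hpairs : (pu.append prest).pairs
        = pu.pairs ++ prest.pairs.map fun q => (q.1 + u.length, q.2 + u.length) := rfl
    have hM : ((u :: rest).map dyckWidth).foldr max 0
        = max (dyckWidth u) ((rest.map dyckWidth).foldr max 0) := by simp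
    by_cases ht : t ≤ pu.pairs.length
    · refine ⟨0, (↑((pu.pairs.take t).flatMap fun q => [q.1, q.2]).toFinset : Set ℕ),
        Finset.finite_toSet _, ?_, ?_⟩
      · rw [hpairs, List.take_append_of_le_length ht, Set.Ico_self, Set.empty_union]
      · rw [hM]
        calc sw (↑((pu.pairs.take t).flatMap fun q => [q.1, q.2]).toFinset : Set ℕ)
            ≤ repWidth pu := sw_take_le pu t
          _ = dyckWidth u := hpu
          _ ≤ max (dyckWidth u) ((rest.map dyckWidth).foldr max 0) := le_max_left _ _
    · obtain ⟨m', T', hfin, hset, hsw⟩ := hrest (t - pu.pairs.length)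
      refine ⟨u.length + m', (· + u.length) '' T', hfin.image _, ?_, ?_⟩
      · rw [hpairs, List.take_append, List.take_of_length_le (by omega),
          List.flatMap_append, List.toFinset_append, Finset.coe_union, full_set pu,
          ← List.map_take, flatMap_shift, coe_toFinset_map, hset, Set.image_union,
          image_add_Ico, ← Set.union_assoc,
          Set.Ico_union_Ico_eq_Ico (Nat.zero_le _) (Nat.le_add_left _ _)]
        rw [Nat.add_comm m' u.length]
      · refine le_trans (sw_shift_le T' hfin u.length) (le_trans hsw ?_)
        rw [hM]
        exact le_max_right _ _

end lemmas


/-- If a Dyck word factorizes as a concatenation of Dyck words σ₁ ⋯ σ_t, then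
its width is at most 1 + maxᵢ width(σᵢ). -/
theorem dyckWidth_join_le (ws : List (List ℤ)) (h : ∀ u ∈ ws, IsDyck u) :
    dyckWidth ws.flatten ≤ 1 + (ws.map dyckWidth).foldr max 0 := by
  obtain ⟨p, hp⟩ := key ws h
  refine le_trans (Nat.sInf_le ⟨p, rfl⟩) ?_
  refine Finset.sup_le fun t _ => ?_
  obtain ⟨m, T, hfin, hset, hsw⟩ := hp t
  rw [setWidth_eq_sw, hset]
  exact le_trans (sw_prefix_union T hfin m) (by omega)
end

section
/- For all integers x ≥ 2 and n ≥ 1, every factor of Z(n) of the form u·v·(−^x) such that the height increase on u satisfies Δ(u) ≥ x has length greater than 2^x. Equivalently, ψ(Z(n), x) ≥ 2^x. -/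
/-- Z(1) = +−, Z(n+1) = + Z(n) Z(n) −. -/
def Zword : ℕ → List ℤ
  | 0 => []
  | n + 1 => 1 :: (Zword n ++ Zword n ++ [-1])

lemma Z_sum (n : ℕ) : (Zword n).sum = 0 := by
  induction n with
  | zero => simp [Zword]
  | succ n ih => simp [Zword, ih]

lemma Z_len (n : ℕ) : (Zword n).length + 2 = 2 ^ (n + 1) := by
  induction n with
  | zero => simp [Zword]
  | succ n ih =>
      have : (Zword (n+1)).length = (Zword n).length + (Zword n).length + 2 := by
        simp [Zword]; omega
      rw [this, pow_succ]; omega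

lemma negsum {s : List ℤ} (h : ∀ e ∈ s, e = (-1 : ℤ)) : s.sum = -(s.length : ℤ) := by
  induction s with
  | nil => simp
  | cons a t ih =>
      have ha := h a (by simp)
      have ht := ih (fun e he => h e (by simp [he]))
      simp [ha, ht]

lemma repsum (k : ℕ) : (List.replicate k (-1 : ℤ)).sum = -(k : ℤ) := by
  have := negsum (s := List.replicate k (-1 : ℤ)) (fun e he => List.eq_of_mem_replicate he)
  simpa using this

lemma rep_decomp {s a : List ℤ} {x : ℕ} (h : List.replicate x (-1 : ℤ) = s ++ a) :
    s = List.replicate s.length (-1) ∧ a = List.replicate a.length (-1) := by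
  constructor
  · apply List.eq_replicate_of_mem
    intro e he
    exact List.eq_of_mem_replicate (h ▸ (List.mem_append.mpr (Or.inl he)))
  · apply List.eq_replicate_of_mem
    intro e he
    exact List.eq_of_mem_replicate (h ▸ (List.mem_append.mpr (Or.inr he)))

lemma Zcons (n k : ℕ) : Zword (n+1) ++ List.replicate k (-1 : ℤ) =
    1 :: (Zword n ++ (Zword n ++ List.replicate (k+1) (-1))) := by
  simp [Zword, List.replicate_succ, List.append_assoc]

lemma Z_prefix_nonneg : ∀ (n : ℕ) {a b : List ℤ}, Zword n = a ++ b → 0 ≤ a.sum := by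
  intro n
  induction n with
  | zero =>
      intro a b h
      simp only [Zword] at h
      rw [eq_comm, List.append_eq_nil_iff] at h
      simp [h.1]
  | succ n ih =>
      intro a b h
      cases a with
      | nil => simp
      | cons x a' =>
          rw [Zword, List.cons_append] at h
          injection h with hx h
          subst hx
          rw [List.append_assoc] at h
          rcases List.append_eq_append_iff.mp h with ⟨a₁, ha₁, ha₂⟩ | ⟨c₁, hc₁, _⟩
          · rcases List.append_eq_append_iff.mp ha₂ with ⟨d₁, hd₁, hd₂⟩ | ⟨e, he₁, _⟩
            · cases d₁ with
              | nil =>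
                  simp at hd₁
                  simp [ha₁, hd₁, Z_sum]
              | cons y d₁' =>
                  injection hd₂ with hy hd₂'
                  simp at hd₂'
                  simp [ha₁, hd₁, Z_sum, ← hy, hd₂'.1]
            · have := ih he₁
              simp [ha₁, Z_sum]
              linarith
          · have := ih hc₁
            simp
            linarith

lemma Z_prefix_le : ∀ (n k : ℕ) {s t : List ℤ},
    Zword n ++ List.replicate k (-1) = s ++ t → s.sum ≤ (n : ℤ) := by
  intro n
  induction n with
  | zero =>
      intro k s t h
      simp only [Zword, List.nil_append] at h
      have := (rep_decomp h).1
      rw [this, repsum]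
      simp
  | succ n ih =>
      intro k s t h
      rw [Zcons] at h
      cases s with
      | nil => simp; positivity
      | cons x s' =>
          rw [List.cons_append] at h
          injection h with hx h
          subst hx
          rcases List.append_eq_append_iff.mp h with ⟨a, ha₁, ha₂⟩ | ⟨c, hc₁, hc₂⟩
          · -- s' = Zn ++ a, Zn ++ R(k+1) = a ++ t
            have := ih (k+1) ha₂
            simp [ha₁, Z_sum]
            push_cast
            linarith
          · -- Zn = s' ++ c
            have := ih 0 (s := s') (t := c) (by simpa using hc₁)
            simp
            push_cast
            linarith

lemma Z_factor_le : ∀ (n k : ℕ) {p u q : List ℤ},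
    Zword n ++ List.replicate k (-1) = p ++ u ++ q → u.sum ≤ (n : ℤ) := by
  intro n
  induction n with
  | zero =>
      intro k p u q h
      simp only [Zword, List.nil_append] at h
      rw [List.append_assoc] at h
      have := (rep_decomp h).2
      have h2 := (rep_decomp this.symm).1
      rw [h2, repsum]
      simp
  | succ n ih =>
      intro k p u q h
      rw [Zcons] at h
      cases p with
      | nil =>
          simp only [List.nil_append] at h
          cases u with
          | nil => simp; positivity
          | cons x u1 =>
              rw [List.cons_append] at h
              injection h with hx h
              subst hx
              rcases List.append_eq_append_iff.mp h with ⟨a, ha₁, ha₂⟩ | ⟨c, hc₁, hc₂⟩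
              · -- u1 = Zn ++ a, Zn ++ R(k+1) = a ++ q
                have := Z_prefix_le n (k+1) ha₂
                simp [ha₁, Z_sum]
                push_cast
                linarith
              · -- Zn = u1 ++ c
                have := Z_prefix_le n 0 (s := u1) (t := c) (by simpa using hc₁)
                simp
                push_cast
                linarith
      | cons x p' =>
          rw [List.cons_append, List.cons_append] at h
          injection h with hx h
          rw [List.append_assoc] at h
          rcases List.append_eq_append_iff.mp h with ⟨a, ha₁, ha₂⟩ | ⟨c, hc₁, hc₂⟩
          · -- p' = Zn ++ a, Zn ++ R(k+1) = a ++ (u ++ q)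
            have := ih (k+1) (p := a) (u := u) (q := q)
              (by rw [ha₂, List.append_assoc])
            push_cast at *
            linarith
          · -- Zn = p' ++ c, u ++ q = c ++ (Zn ++ R(k+1))
            rcases List.append_eq_append_iff.mp hc₂ with ⟨b, hb₁, hb₂⟩ | ⟨b, hb₁, hb₂⟩
            · -- c = u ++ b, q = b ++ (Zn ++ R(k+1)) : u factor of Zn
              have := ih 0 (p := p') (u := u) (q := b)
                (by simp [hc₁, hb₁, List.append_assoc])
              push_cast at *
              linarith
            · -- u = c ++ b, Zn ++ R(k+1) = b ++ q
              have hA : c.sum ≤ 0 := by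
                have h0 := Z_prefix_nonneg n hc₁
                have h1 := congrArg List.sum hc₁
                simp [Z_sum] at h1
                linarith
              have hB : b.sum ≤ (n : ℤ) := Z_prefix_le n (k+1) hb₂
              rw [hb₁]
              simp
              push_cast
              linarith

lemma Z_run_le {n x : ℕ} {c d : List ℤ}
    (h : Zword n = c ++ List.replicate x (-1) ++ d) : x ≤ n := by
  have h1 : 0 ≤ (c ++ List.replicate x (-1)).sum := Z_prefix_nonneg n h
  have h2 : c.sum ≤ (n : ℤ) := Z_prefix_le n 0 (s := c)
    (by simpa [List.append_assoc] using h)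
  simp [repsum] at h1
  have : (x : ℤ) ≤ (n : ℤ) := by linarith
  exact_mod_cast this

lemma Z_run_pos : ∀ (n : ℕ) {x : ℕ} {w z : List ℤ}, 2 ≤ x →
    Zword n = w ++ List.replicate x (-1) ++ z →
    2 ^ (x + 1) ≤ w.length + x + 2 := by
  intro n
  induction n with
  | zero => intro x w z hx h; have := Z_run_le h; omega
  | succ n ih =>
      intro x w z hx h
      cases n with
      | zero => have := Z_run_le h; omega
      | succ m =>
        set n' := m + 1 with hn'
        rw [List.append_assoc] at h
        cases w with
        | nil =>
            rw [List.nil_append] at h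
            obtain ⟨x', rfl⟩ : ∃ x', x = x' + 1 := ⟨x - 1, by omega⟩
            rw [List.replicate_succ, Zword, List.cons_append] at h
            injection h with h1 _
            norm_num at h1
        | cons y w' =>
            rw [Zword, List.cons_append] at h
            injection h with hy h
            rw [List.append_assoc] at h
            rcases List.append_eq_append_iff.mp h with ⟨a, ha₁, ha₂⟩ | ⟨s, hs₁, hs₂⟩
            · -- w' = Zn ++ a, Zn ++ [-1] = a ++ (R x ++ z)
              rcases z.eq_nil_or_concat with rfl | ⟨z₁, e, rfl⟩
              · -- z = [] : run at the very end
                rw [List.append_nil] at ha₂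
                obtain ⟨x', rfl⟩ : ∃ x', x = x' + 1 := ⟨x - 1, by omega⟩
                rw [List.replicate_succ'] at ha₂
                rw [← List.append_assoc] at ha₂
                obtain ⟨hZ, -⟩ := List.append_inj' ha₂ (by simp)
                have hxle : x' ≤ n' := Z_run_le (c := a) (d := [])
                  (by rw [hZ, List.append_nil])
                have hlen := congrArg List.length hZ
                simp [List.length_replicate] at hlen
                have hL := Z_len n'
                have hpow : 2 ^ (x' + 1 + 1) ≤ 2 ^ (n' + 2) :=
                  Nat.pow_le_pow_right (by norm_num) (by omega)
                have hlw := congrArg List.length ha₁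
                simp at hlw
                have : (2:ℕ) ^ (n' + 2) = 2 * 2 ^ (n' + 1) := by ring
                simp only [List.length_cons]
                omega
              · rw [List.concat_eq_append, ← List.append_assoc, ← List.append_assoc] at ha₂
                obtain ⟨hZ, -⟩ := List.append_inj' ha₂ (by simp)
                have := ih hx hZ
                have hlw := congrArg List.length ha₁
                simp at hlw
                simp only [List.length_cons]
                omega
            · -- Zn = w' ++ s, R x ++ z = s ++ (Zn ++ [-1])
              rcases List.append_eq_append_iff.mp hs₂ with ⟨a, ha₁, ha₂⟩ | ⟨c, hc₁, hc₂⟩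
              · -- s = R x ++ a, z = a ++ (Zn ++ [-1])
                have := ih hx (by rw [hs₁, ha₁, ← List.append_assoc])
                simp only [List.length_cons]
                omega
              · -- R x = s ++ c, Zn ++ [-1] = c ++ z
                cases c with
                | nil =>
                    simp only [List.append_nil] at hc₁
                    have := ih hx (w := w') (z := [])
                      (by rw [hs₁, hc₁, List.append_nil])
                    simp only [List.length_cons]
                    omega
                | cons yc c'' =>
                    have hrep := (rep_decomp hc₁).2
                    rw [List.length_cons, List.replicate_succ] at hrep
                    injection hrep with hyc _
                    rw [Zword, List.cons_append, List.cons_append] at hc₂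
                    injection hc₂ with h1 _
                    rw [hyc] at h1
                    norm_num at h1

lemma Z_ascent : ∀ (n : ℕ) {x : ℕ} {p u q : List ℤ}, 1 ≤ x →
    Zword n = p ++ u ++ q → (x : ℤ) ≤ u.sum →
    2 ^ (x + 1) ≤ u.length + q.length + 2 := by
  intro n
  induction n with
  | zero =>
      intro x p u q hx h hs
      simp only [Zword] at h
      rw [eq_comm, List.append_eq_nil_iff, List.append_eq_nil_iff] at h
      rw [h.1.2] at hs
      simp at hs
      omega
  | succ n ih =>
      intro x p u q hx h hs
      have hxn : x ≤ n + 1 := by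
        have h1 : u.sum ≤ ((n+1 : ℕ) : ℤ) := Z_factor_le (n+1) 0 (by simpa using h)
        have : (x:ℤ) ≤ ((n+1:ℕ):ℤ) := le_trans hs h1
        exact_mod_cast this
      cases p with
      | nil =>
          simp only [List.nil_append] at h
          have hpow : 2 ^ (x + 1) ≤ 2 ^ (n + 2) :=
            Nat.pow_le_pow_right (by norm_num) (by omega)
          calc 2 ^ (x+1) ≤ 2 ^ (n+2) := hpow
            _ = (Zword (n+1)).length + 2 := (Z_len (n+1)).symm
            _ = u.length + q.length + 2 := by rw [h]; simp
      | cons y p' =>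
          rw [Zword] at h
          simp only [List.cons_append] at h
          injection h with hy h
          simp only [List.append_assoc] at h
          rcases List.append_eq_append_iff.mp h with ⟨a, ha₁, ha₂⟩ | ⟨c, hc₁, hc₂⟩
          · -- p' = Zn ++ a, Zn ++ [-1] = a ++ (u ++ q)
            rcases List.append_eq_append_iff.mp ha₂ with ⟨b, hb₁, hb₂⟩ | ⟨c, hc₁, hc₂⟩
            · -- a = Zn ++ b, [-1] = b ++ (u ++ q)
              cases b with
              | nil =>
                  simp only [List.nil_append] at hb₂
                  cases u with
                  | nil => simp at hs; omega
                  | cons e u' =>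
                      rw [List.cons_append] at hb₂
                      injection hb₂ with he hb₂'
                      rw [eq_comm, List.append_eq_nil_iff] at hb₂'
                      rw [hb₂'.1, ← he] at hs
                      simp at hs
                      omega
              | cons eb b' =>
                  rw [List.cons_append] at hb₂
                  injection hb₂ with _ hb₂'
                  rw [eq_comm, List.append_eq_nil_iff, List.append_eq_nil_iff] at hb₂'
                  rw [hb₂'.2.1] at hs
                  simp at hs
                  omega
            · -- Zn = a ++ c, u ++ q = c ++ [-1]
              rcases List.append_eq_append_iff.mp hc₂ with ⟨b, hb₁, hb₂⟩ | ⟨b, hb₁, hb₂⟩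
              · -- c = u ++ b, q = b ++ [-1] : u inside Zn
                have := ih hx (p := a) (u := u) (q := b)
                  (by rw [hc₁, hb₁, List.append_assoc]) hs
                have hlq := congrArg List.length hb₂
                simp at hlq
                omega
              · -- u = c ++ b, [-1] = b ++ q
                cases b with
                | nil =>
                    simp only [List.append_nil] at hb₁
                    simp only [List.nil_append] at hb₂
                    subst hb₁
                    have := ih hx (p := a) (u := u) (q := [])
                      (by rw [hc₁, List.append_nil]) hs
                    simp at this
                    omega
                | cons eb b' =>
                    rw [List.cons_append] at hb₂
                    injection hb₂ with he hb₂'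
                    rw [eq_comm, List.append_eq_nil_iff] at hb₂'
                    obtain ⟨rfl, rfl⟩ := hb₂'
                    have hsc : (x : ℤ) ≤ c.sum := by
                      have := congrArg List.sum hb₁
                      simp [← he] at this
                      linarith
                    have := ih hx (p := a) (u := c) (q := [])
                      (by rw [hc₁, List.append_nil]) hsc
                    have hlu := congrArg List.length hb₁
                    simp at hlu this
                    simp only [List.length_nil]
                    omega
          · -- Zn = p' ++ c, u ++ q = c ++ (Zn ++ [-1])
            rcases List.append_eq_append_iff.mp hc₂ with ⟨b, hb₁, hb₂⟩ | ⟨b, hb₁, hb₂⟩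
            · -- c = u ++ b, q = b ++ (Zn ++ [-1])
              have := ih hx (p := p') (u := u) (q := b)
                (by rw [hc₁, hb₁, List.append_assoc]) hs
              have hlq := congrArg List.length hb₂
              simp at hlq
              omega
            · -- u = c ++ b, Zn ++ [-1] = b ++ q
              have hcs : c.sum ≤ 0 := by
                have h0 := Z_prefix_nonneg n hc₁
                have h1 := congrArg List.sum hc₁
                simp [Z_sum] at h1
                linarith
              have hbs : (x : ℤ) ≤ b.sum := by
                have := congrArg List.sum hb₁
                simp at this
                linarith
              rcases List.append_eq_append_iff.mp hb₂.symm with ⟨d, hd₁, hd₂⟩ | ⟨d, hd₁, hd₂⟩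
              · -- Zn = b ++ d, q = d ++ [-1]
                have := ih hx (p := []) (u := b) (q := d)
                  (by simp [hd₁]) hbs
                have hlu := congrArg List.length hb₁
                have hlq := congrArg List.length hd₂
                simp at hlu hlq
                omega
              · -- b = Zn ++ d, [-1] = d ++ q
                cases d with
                | nil =>
                    simp only [List.append_nil] at hd₁
                    rw [hd₁, Z_sum] at hbs
                    omega
                | cons ed d' =>
                    rw [List.cons_append] at hd₂
                    injection hd₂ with he hd₂'
                    rw [eq_comm, List.append_eq_nil_iff] at hd₂'
                    obtain ⟨rfl, rfl⟩ := hd₂'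
                    rw [hd₁] at hbs
                    simp [Z_sum, ← he] at hbs
                    omega

lemma Z_main : ∀ (n k : ℕ) {x : ℕ} {p u v z : List ℤ}, 2 ≤ x →
    Zword n ++ List.replicate k (-1) =
      p ++ (u ++ (v ++ (List.replicate x (-1) ++ z))) →
    (x : ℤ) ≤ u.sum → 2 ^ x < u.length + v.length + x := by
  intro n
  induction n with
  | zero =>
      intro k x p u v z hx h hs
      have : u.sum ≤ ((0:ℕ) : ℤ) := Z_factor_le 0 k (p := p) (u := u)
        (q := v ++ (List.replicate x (-1) ++ z)) (by rw [h, List.append_assoc])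
      simp at this
      have : (x : ℤ) ≤ 0 := le_trans hs this
      omega
  | succ n ih =>
      intro k x p u v z hx h hs
      have hxn : x ≤ n + 1 := by
        have h1 : u.sum ≤ ((n+1 : ℕ) : ℤ) := Z_factor_le (n+1) k (p := p) (u := u)
          (q := v ++ (List.replicate x (-1) ++ z)) (by rw [h, List.append_assoc])
        have : (x:ℤ) ≤ ((n+1:ℕ):ℤ) := le_trans hs h1
        exact_mod_cast this
      cases n with
      | zero => omega
      | succ m =>
        set n' := m + 1 with hn'
        have h2x : 2 ^ 2 ≤ 2 ^ x := Nat.pow_le_pow_right (by norm_num) hx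
        have hps : (2:ℕ) ^ (x+1) = 2 * 2 ^ x := by ring
        rw [Zcons n' k] at h
        have hhead : ∀ {j : ℕ}, Zword n' ++ List.replicate j (-1 : ℤ) =
            1 :: (Zword m ++ (Zword m ++ List.replicate (j+1) (-1))) :=
          fun {j} => Zcons m j
        cases p with
        | nil =>
            rw [List.nil_append] at h
            cases u with
            | nil => simp at hs; omega
            | cons yu u1 =>
                rw [List.cons_append] at h
                injection h with hyu h
                have h' : (u1 ++ v) ++ (List.replicate x (-1) ++ z) =
                    Zword n' ++ (Zword n' ++ List.replicate (k+1) (-1)) := by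
                  rw [List.append_assoc]; exact h.symm
                rcases List.append_eq_append_iff.mp h' with ⟨a, ha₁, ha₂⟩ | ⟨c, hc₁, hc₂⟩
                · -- ha₁ : Zn = (u1++v) ++ a, ha₂ : R x ++ z = a ++ B
                  rcases List.append_eq_append_iff.mp ha₂ with ⟨b, hb₁, hb₂⟩ | ⟨b, hb₁, hb₂⟩
                  · -- hb₁ : a = R x ++ b : run inside first copy
                    have hrun := Z_run_pos n' hx (w := u1 ++ v) (z := b)
                      (by rw [ha₁, hb₁]; simp [List.append_assoc])
                    simp only [List.length_append] at hrun
                    simp only [List.length_cons]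
                    omega
                  · -- hb₁ : R x = a ++ b, hb₂ : B = b ++ z
                    cases b with
                    | nil =>
                        rw [List.append_nil] at hb₁
                        have hrun := Z_run_pos n' hx (w := u1 ++ v) (z := [])
                          (by rw [ha₁, ← hb₁]; simp)
                        simp only [List.length_append] at hrun
                        simp only [List.length_cons]
                        omega
                    | cons yb b' =>
                        have hrep := (rep_decomp hb₁).2
                        rw [List.length_cons, List.replicate_succ] at hrep
                        injection hrep with hyb _
                        rw [hhead, List.cons_append] at hb₂
                        injection hb₂ with h1 _
                        rw [hyb] at h1
                        norm_num at h1
                · -- hc₁ : u1 ++ v = Zn ++ c, hc₂ : B = c ++ (R x ++ z)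
                  rcases List.append_eq_append_iff.mp hc₁ with ⟨b, hb₁, hb₂⟩ | ⟨b, hb₁, hb₂⟩
                  · -- hb₁ : Zn = u1 ++ b, hb₂ : v = b ++ c : ascent x-1 from start
                    obtain ⟨x', rfl⟩ : ∃ x', x = x' + 1 := ⟨x - 1, by omega⟩
                    have hs1 : (x' : ℤ) ≤ u1.sum := by
                      push_cast at hs
                      simp [← hyu] at hs
                      linarith
                    have hasc := Z_ascent n' (x := x') (p := []) (u := u1) (q := b)
                      (by omega) (by simp [hb₁]) hs1
                    have hlv := congrArg List.length hb₂
                    simp at hlv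
                    simp only [List.length_cons]
                    omega
                  · -- hb₁ : u1 = Zn ++ b : u very long
                    have hlu := congrArg List.length hb₁
                    simp at hlu
                    have hL := Z_len n'
                    have hp2 : 2 ^ x ≤ 2 ^ (n' + 1) :=
                      Nat.pow_le_pow_right (by norm_num) (by omega)
                    simp only [List.length_cons]
                    omega
        | cons yp p' =>
            rw [List.cons_append] at h
            injection h with hyp h
            rw [eq_comm] at h
            rcases List.append_eq_append_iff.mp h with ⟨a, ha₁, ha₂⟩ | ⟨c, hc₁, hc₂⟩
            · -- ha₁ : Zn = p' ++ a, ha₂ : u ++ (v ++ (R x ++ z)) = a ++ B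
              rcases List.append_eq_append_iff.mp ha₂ with ⟨b, hb₁, hb₂⟩ | ⟨b, hb₁, hb₂⟩
              · -- hb₁ : a = u ++ b, hb₂ : v ++ (R x ++ z) = b ++ B : u in first copy
                have hasc := Z_ascent n' (x := x) (p := p') (u := u) (q := b)
                  (by omega) (by rw [ha₁, hb₁, ← List.append_assoc]) hs
                rcases List.append_eq_append_iff.mp hb₂ with ⟨c, hcc₁, hcc₂⟩ | ⟨c, hcc₁, hcc₂⟩
                · -- hcc₁ : b = v ++ c, hcc₂ : R x ++ z = c ++ B
                  rcases List.append_eq_append_iff.mp hcc₂ with ⟨d, hd₁, hd₂⟩ | ⟨d, hd₁, hd₂⟩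
                  · -- hd₁ : c = R x ++ d : run inside first copy
                    exact ih 0 hx (p := p') (u := u) (v := v) (z := d)
                      (by simp [ha₁, hb₁, hcc₁, hd₁, List.append_assoc]) hs
                  · -- hd₁ : R x = c ++ d, hd₂ : B = d ++ z
                    cases d with
                    | nil =>
                        rw [List.append_nil] at hd₁
                        exact ih 0 hx (p := p') (u := u) (v := v) (z := [])
                          (by simp [ha₁, hb₁, hcc₁, ← hd₁, List.append_assoc]) hs
                    | cons yd d' =>
                        have hrep := (rep_decomp hd₁).2
                        rw [List.length_cons, List.replicate_succ] at hrep
                        injection hrep with hyd _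
                        rw [hhead, List.cons_append] at hd₂
                        injection hd₂ with h1 _
                        rw [hyd] at h1
                        norm_num at h1
                · -- hcc₁ : v = b ++ c : |v| ≥ |b|
                  have hlv := congrArg List.length hcc₁
                  simp at hlv
                  omega
              · -- hb₁ : u = a ++ b, hb₂ : B = b ++ (v ++ (R x ++ z)) : u straddles
                have has : a.sum ≤ 0 := by
                  have h0 := Z_prefix_nonneg n' ha₁
                  have h1 := congrArg List.sum ha₁
                  simp [Z_sum] at h1
                  linarith
                have hbs : (x : ℤ) ≤ b.sum := by
                  have := congrArg List.sum hb₁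
                  simp at this
                  linarith
                have := ih (k+1) hx (p := []) (u := b) (v := v) (z := z)
                  (by rw [hb₂]; simp) hbs
                have hlu := congrArg List.length hb₁
                simp at hlu
                omega
            · -- hc₁ : p' = Zn ++ c, hc₂ : B = c ++ (u ++ (v ++ (R x ++ z)))
              exact ih (k+1) hx (p := c) (u := u) (v := v) (z := z) hc₂ hs

/-- ψ(Z(n), x) ≥ 2^x: every factor of Z(n) of the form u·v·(−^x) with height
increase Δ(u) ≥ x (note Δ(u) = u.sum) has length greater than 2^x. -/
theorem Zword_psi (x n : ℕ) (hx : 2 ≤ x) (hn : 1 ≤ n)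
    (p u v z : List ℤ)
    (hfac : Zword n = p ++ (u ++ v ++ List.replicate x (-1)) ++ z)
    (hΔ : (x : ℤ) ≤ u.sum) :
    2 ^ x < u.length + v.length + x := by
  exact Z_main n 0 (p := p) (u := u) (v := v) (z := z) hx
    (by rw [hfac]; simp [List.append_assoc]) hΔ
end
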